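/- The Sugeno-type trace is positively F-homogeneous: for any positive semidefinite a ∈ Mₙ(ℂ) and any k ≥ 0, ψ_α(kI ∧ a) = min(k, ψ_α(a)), where kI ∧ a denotes the functional calculus of a by x ↦ min(k, x). -/

import Mathlib

open Matrix BigOperators Finset
open scoped ComplexOrder

/-- The `i`-th largest eigenvalue (0-indexed) of a Hermitian matrix. -/
noncomputable def eigDesc {n : ℕ} (a : Matrix (Fin n) (Fin n) ℂ) (ha : a.IsHermitian) (i : Fin n) : ℝ :=
  ha.eigenvalues (Tuple.sort ha.eigenvalues i.rev)

/-- Eigenvalues in decreasing order, extended by `0` beyond the size. `eigN a ha i = λ_{i+1}(a)`. -/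
noncomputable def eigN {n : ℕ} (a : Matrix (Fin n) (Fin n) ℂ) (ha : a.IsHermitian) (i : ℕ) : ℝ :=
  if h : i < n then eigDesc a ha ⟨i, h⟩ else 0

/-- The non-linear trace of Choquet type:
`φ_α(a) = ∑_{i=1}^{n-1} (λ_i(a) - λ_{i+1}(a)) α(i) + λ_n(a) α(n)`. -/
noncomputable def choquetTrace {n : ℕ} (α : ℕ → ℝ) (a : Matrix (Fin n) (Fin n) ℂ)
    (ha : a.IsHermitian) : ℝ :=
  ∑ i ∈ Finset.range n, (eigN a ha i - eigN a ha (i + 1)) * α (i + 1)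

/-- Functional calculus of a Hermitian matrix `a` by a function `f : ℝ → ℝ` on its eigenvalues. -/
noncomputable def funCalc {n : ℕ} (f : ℝ → ℝ) (a : Matrix (Fin n) (Fin n) ℂ)
    (ha : a.IsHermitian) : Matrix (Fin n) (Fin n) ℂ :=
  (ha.eigenvectorUnitary : Matrix (Fin n) (Fin n) ℂ) *
    Matrix.diagonal (fun i => (f (ha.eigenvalues i) : ℂ)) *
    star (ha.eigenvectorUnitary : Matrix (Fin n) (Fin n) ℂ)

/-- The positive semidefinite square root of a positive semidefinite matrix
(as defined in Mathlib of December 2024, since removed). -/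
noncomputable def Matrix.PosSemidef.sqrt {n : Type*} [Fintype n] [DecidableEq n]
    {A : Matrix n n ℂ} (hA : A.PosSemidef) : Matrix n n ℂ :=
  hA.1.eigenvectorUnitary.1 * diagonal ((↑) ∘ (√·) ∘ hA.1.eigenvalues) *
    (star hA.1.eigenvectorUnitary : Matrix n n ℂ)

/-- The absolute value `|a| = (a^* a)^{1/2}` of a matrix. -/
noncomputable def matAbs {n : ℕ} (a : Matrix (Fin n) (Fin n) ℂ) : Matrix (Fin n) (Fin n) ℂ :=
  (Matrix.posSemidef_conjTranspose_mul_self a).sqrt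

theorem matAbs_isHermitian {n : ℕ} (a : Matrix (Fin n) (Fin n) ℂ) : (matAbs a).IsHermitian :=
  by
    unfold matAbs Matrix.PosSemidef.sqrt
    rw [star_eq_conjTranspose]
    apply isHermitian_mul_mul_conjTranspose
    exact isHermitian_diagonal_of_self_adjoint _ (by funext i; simp [Complex.conj_ofReal])

/-- The non-linear trace of Sugeno type: `ψ_α(a) = ⋁_{i=1}^n (λ_i(a) ∧ α(i))`. -/
noncomputable def sugeno {n : ℕ} [NeZero n] (α : ℕ → ℝ) (a : Matrix (Fin n) (Fin n) ℂ)
    (ha : a.IsHermitian) : ℝ :=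
  Finset.univ.sup' Finset.univ_nonempty fun i : Fin n => min (eigDesc a ha i) (α (i + 1))

/-! Since `x ↦ min k x` is monotone, it preserves the decreasing order of the eigenvalues, so the
`i`-th largest eigenvalue of `kI ∧ a` is `min k (λ_i a)`. Then
`ψ_α(kI ∧ a) = max_i min k (min (λ_i a) (α i)) = min k ψ_α(a)` by distributivity of `min`
over `max`. The eigenvalues of `funCalc f a` are identified with `f ∘ λ(a)` through the roots of
its characteristic polynomial, and a decreasing tuple is determined by its multiset of values. -/

namespace Matrix.IsHermitian

variable {n : ℕ} {a : Matrix (Fin n) (Fin n) ℂ} (ha : a.IsHermitian)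

theorem antitone_eigDesc : Antitone (eigDesc a ha) :=
  (Tuple.monotone_sort ha.eigenvalues).comp_antitone Fin.rev_anti

theorem ofFn_eigDesc_perm : (List.ofFn (eigDesc a ha)).Perm (List.ofFn ha.eigenvalues) :=
  (Fin.revPerm.ofFn_comp_perm (ha.eigenvalues ∘ Tuple.sort ha.eigenvalues)).trans
    ((Tuple.sort ha.eigenvalues).ofFn_comp_perm ha.eigenvalues)

theorem eigDesc_eq_of_perm {g : Fin n → ℝ} (hg : Antitone g)
    (hp : (List.ofFn g).Perm (List.ofFn ha.eigenvalues)) : eigDesc a ha = g :=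
  List.ofFn_injective <| (ha.ofFn_eigDesc_perm.trans hp.symm).eq_of_sortedGE
    ha.antitone_eigDesc.sortedGE_ofFn hg.sortedGE_ofFn

theorem funCalc_eq_cfc (f : ℝ → ℝ) : funCalc f a ha = cfc f a :=
  (ha.cfc_eq f).symm

open Polynomial in
theorem ofFn_eigenvalues_funCalc_perm (f : ℝ → ℝ) (hb : (funCalc f a ha).IsHermitian) :
    (List.ofFn hb.eigenvalues).Perm (List.ofFn (f ∘ ha.eigenvalues)) := by
  have hcharpoly : (funCalc f a ha).charpoly = ∏ i, (X - C (f (ha.eigenvalues i) : ℂ)) := by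
    rw [ha.funCalc_eq_cfc, ha.charpoly_cfc_eq]
    rfl
  have hroots := hb.roots_charpoly_eq_eigenvalues
  rw [hcharpoly, roots_prod _ _ (prod_ne_zero_iff.mpr fun i _ => X_sub_C_ne_zero _)]
    at hroots
  have hmap : univ.val.map (f ∘ ha.eigenvalues) = univ.val.map hb.eigenvalues :=
    Multiset.map_injective (RCLike.ofReal_injective (K := ℂ)) <| by
      simpa [Multiset.map_map, Function.comp_def] using hroots
  rw [Fin.univ_val_map, Fin.univ_val_map] at hmap
  exact (Multiset.coe_eq_coe.mp hmap).symm

theorem eigDesc_funCalc {f : ℝ → ℝ} (hf : Monotone f) (hb : (funCalc f a ha).IsHermitian) :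
    eigDesc (funCalc f a ha) hb = f ∘ eigDesc a ha := by
  refine hb.eigDesc_eq_of_perm (hf.comp_antitone ha.antitone_eigDesc) ?_
  have hperm := ha.ofFn_eigDesc_perm.map f
  rw [List.map_ofFn, List.map_ofFn] at hperm
  exact hperm.trans (ha.ofFn_eigenvalues_funCalc_perm f hb).symm

end Matrix.IsHermitian

theorem stmt16_general (n : ℕ) [NeZero n] (α : ℕ → ℝ)
    (a : Matrix (Fin n) (Fin n) ℂ) (ha : a.PosSemidef) (k : ℝ)
    (h : (funCalc (fun x => min k x) a ha.1).IsHermitian) :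
    sugeno α (funCalc (fun x => min k x) a ha.1) h = min k (sugeno α a ha.1) := by
  simp only [sugeno, ha.1.eigDesc_funCalc (fun _ _ => min_le_min_left k) h,
    Function.comp_apply, min_assoc]
  exact (Finset.sup'_inf_distrib_left _ _ k).symm

/-- the Sugeno-type trace is positively F-homogeneous:
`ψ_α(kI ∧ a) = k ∧ ψ_α(a)`. -/
theorem stmt16 (n : ℕ) [NeZero n] (α : ℕ → ℝ)
    (hnn : ∀ i : ℕ, 1 ≤ i → i ≤ n → 0 ≤ α i)
    (hmono : ∀ i j : ℕ, 1 ≤ i → i ≤ j → j ≤ n → α i ≤ α j)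
    (a : Matrix (Fin n) (Fin n) ℂ) (ha : a.PosSemidef) (k : ℝ) (hk : 0 ≤ k)
    (h : (funCalc (fun x => min k x) a ha.1).IsHermitian) :
    sugeno α (funCalc (fun x => min k x) a ha.1) h = min k (sugeno α a ha.1) :=
  stmt16_general n α a ha k h
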